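/- Let C be a monoidal dagger category. The equivalence between Frobenius monoids in C and strong Frobenius monads on C given by B ↦ − ⊗ B and T ↦ T(I) restricts to an equivalence between special Frobenius monoids in C and special strong Frobenius monads on C: if B is a special Frobenius monoid then − ⊗ B is a special strong Frobenius monad, and if T is a special strong Frobenius monad then T(I) is a special Frobenius monoid. -/

import Mathlib

/-!
For a monoid `B`, the multiplication of `− ⊗ B` is `A ◁ m` up to associators, so the Frobenius
law and speciality of `m` pass to it after whiskering by `A`.

Conversely, for a strong Frobenius monad `T` the maps `φ_X = T(ρ_X) ∘ st_{X,I} : X ⊗ T(I) ⟶ T(X)`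
are unitary and natural in `X`, and the multiplication of `T(I)` is `μ_I ∘ φ_{T(I)}`. The strength
axioms turn the monoid laws of `T(I)` into the monad laws of `T`, and conjugating by `φ_{T(I)}`
turns the left-hand side of the Frobenius law of `T(I)` into `μ_{T(I)} ∘ T(μ_I†)`, which is
self-adjoint by the Frobenius law of `T`. Speciality follows from `m† ≫ m = μ_I† ≫ φ† ≫ φ ≫ μ_I`.
-/

open CategoryTheory Category MonoidalCategory

universe v u

/-- A dagger structure on a category: a contravariant, identity-on-objects,
involutive operation on morphisms. -/
class DaggerStruct (C : Type u) [Category.{v} C] where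
  dag : ∀ {X Y : C}, (X ⟶ Y) → (Y ⟶ X)
  dag_dag : ∀ {X Y : C} (f : X ⟶ Y), dag (dag f) = f
  dag_id : ∀ X : C, dag (𝟙 X) = 𝟙 X
  dag_comp : ∀ {X Y Z : C} (f : X ⟶ Y) (g : Y ⟶ Z), dag (f ≫ g) = dag g ≫ dag f

notation:max f "†" => DaggerStruct.dag f

/-- A monoidal dagger category: the dagger cooperates with the monoidal structure. -/
class MonoidalDagger (C : Type u) [Category.{v} C] [MonoidalCategory C] extends
    DaggerStruct C where
  dag_tensor : ∀ {X₁ Y₁ X₂ Y₂ : C} (f : X₁ ⟶ Y₁) (g : X₂ ⟶ Y₂), (f ⊗ₘ g)† = f† ⊗ₘ g†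
  assoc_unitary : ∀ X Y Z : C, ((α_ X Y Z).hom)† = (α_ X Y Z).inv
  lunitor_unitary : ∀ X : C, ((λ_ X).hom)† = (λ_ X).inv
  runitor_unitary : ∀ X : C, ((ρ_ X).hom)† = (ρ_ X).inv

/-- A symmetric monoidal dagger category: additionally the symmetries are unitary. -/
class SymmetricDagger (C : Type u) [Category.{v} C] [MonoidalCategory C]
    [SymmetricCategory C] extends MonoidalDagger C where
  braiding_unitary : ∀ X Y : C, ((β_ X Y).hom)† = (β_ X Y).inv

/-- A monoid object, given by explicit data. -/
structure IsMonoidObj {C : Type u} [Category.{v} C] [MonoidalCategory C] (A : C)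
    (m : A ⊗ A ⟶ A) (u : 𝟙_ C ⟶ A) : Prop where
  mul_assoc : (m ⊗ₘ 𝟙 A) ≫ m = (α_ A A A).hom ≫ (𝟙 A ⊗ₘ m) ≫ m
  one_mul : (u ⊗ₘ 𝟙 A) ≫ m = (λ_ A).hom
  mul_one : (𝟙 A ⊗ₘ u) ≫ m = (ρ_ A).hom

/-- A Frobenius monoid in a monoidal dagger category. -/
structure IsFrobeniusMonoid {C : Type u} [Category.{v} C] [MonoidalCategory C]
    [MonoidalDagger C] (A : C) (m : A ⊗ A ⟶ A) (u : 𝟙_ C ⟶ A) extends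
    IsMonoidObj A m u : Prop where
  frobenius : (m† ⊗ₘ 𝟙 A) ≫ (α_ A A A).hom ≫ (𝟙 A ⊗ₘ m) =
    (𝟙 A ⊗ₘ m†) ≫ (α_ A A A).inv ≫ (m ⊗ₘ 𝟙 A)

/-- A Frobenius monad on a dagger category. -/
structure IsFrobeniusMonad {C : Type u} [Category.{v} C] [DaggerStruct C]
    (T : Monad C) : Prop where
  map_dag : ∀ {X Y : C} (f : X ⟶ Y), T.map (f†) = (T.map f)†
  frobenius : ∀ A : C,
    ((T.μ.app (T.obj A))†) ≫ T.map (T.μ.app A) =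
      T.map ((T.μ.app A)†) ≫ T.μ.app (T.obj A)

variable {C : Type u} [Category.{v} C] [MonoidalCategory C]

/-- Multiplication `μ_A = (id_A ⊗ m) ∘ α_{A,B,B}` of the writer monad `− ⊗ B`. -/
def wMu (B : C) (m : B ⊗ B ⟶ B) (A : C) : (A ⊗ B) ⊗ B ⟶ A ⊗ B :=
  (α_ A B B).hom ≫ (𝟙 A ⊗ₘ m)

/-- Unit `η_A = (id_A ⊗ u) ∘ ρ_A⁻¹` of the writer monad `− ⊗ B`. -/
def wEta (B : C) (u : 𝟙_ C ⟶ B) (A : C) : A ⟶ A ⊗ B :=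
  (ρ_ A).inv ≫ (𝟙 A ⊗ₘ u)

/-- Strength `st_{X,A} : X ⊗ (A ⊗ B) ⟶ (X ⊗ A) ⊗ B` of the writer monad, given by the
associator. -/
def wSt (B : C) (X A : C) : X ⊗ (A ⊗ B) ⟶ (X ⊗ A) ⊗ B :=
  (α_ X A B).inv

/-- A strong Frobenius monad on a monoidal dagger category: a Frobenius monad `T` that is
simultaneously a strong monad, with every strength map `st_{X,Y}` unitary. -/
structure IsStrongFrobeniusMonad {C : Type u} [Category.{v} C] [MonoidalCategory C]
    [MonoidalDagger C] (T : Monad C)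
    (st : ∀ X Y : C, X ⊗ T.obj Y ⟶ T.obj (X ⊗ Y)) : Prop where
  map_dag : ∀ {X Y : C} (f : X ⟶ Y), T.map (f†) = (T.map f)†
  frobenius : ∀ A : C,
    ((T.μ.app (T.obj A))†) ≫ T.map (T.μ.app A) =
      T.map ((T.μ.app A)†) ≫ T.μ.app (T.obj A)
  st_natural : ∀ {X X' Y Y' : C} (f : X ⟶ X') (g : Y ⟶ Y'),
    (f ⊗ₘ T.map g) ≫ st X' Y' = st X Y ≫ T.map (f ⊗ₘ g)
  st_assoc : ∀ X Y Z : C,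
    (α_ X Y (T.obj Z)).inv ≫ st (X ⊗ Y) Z =
      (𝟙 X ⊗ₘ st Y Z) ≫ st X (Y ⊗ Z) ≫ T.map (α_ X Y Z).inv
  st_lunit : ∀ A : C, st (𝟙_ C) A ≫ T.map (λ_ A).hom = (λ_ (T.obj A)).hom
  st_mu : ∀ X A : C,
    (𝟙 X ⊗ₘ T.μ.app A) ≫ st X A =
      st X (T.obj A) ≫ T.map (st X A) ≫ T.μ.app (X ⊗ A)
  st_eta : ∀ X A : C, (𝟙 X ⊗ₘ T.η.app A) ≫ st X A = T.η.app (X ⊗ A)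
  st_unitary₁ : ∀ X Y : C, st X Y ≫ ((st X Y)†) = 𝟙 (X ⊗ T.obj Y)
  st_unitary₂ : ∀ X Y : C, ((st X Y)†) ≫ st X Y = 𝟙 (T.obj (X ⊗ Y))

/-- The multiplication `μ_I ∘ T(ρ_{T(I)}) ∘ st_{T(I),I}` on `T(I)` for a strong monad. -/
def tMul {C : Type u} [Category.{v} C] [MonoidalCategory C] (T : Monad C)
    (st : ∀ X Y : C, X ⊗ T.obj Y ⟶ T.obj (X ⊗ Y)) :
    T.obj (𝟙_ C) ⊗ T.obj (𝟙_ C) ⟶ T.obj (𝟙_ C) :=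
  st (T.obj (𝟙_ C)) (𝟙_ C) ≫ T.map (ρ_ (T.obj (𝟙_ C))).hom ≫ T.μ.app (𝟙_ C)

section Dagger

open DaggerStruct MonoidalDagger

variable [MonoidalDagger C]

lemma dag_whiskerLeft (X : C) {Y Z : C} (f : Y ⟶ Z) : (X ◁ f)† = X ◁ f† := by
  rw [← id_tensorHom, dag_tensor, dag_id, id_tensorHom]

lemma dag_whiskerRight {X Y : C} (f : X ⟶ Y) (Z : C) : (f ▷ Z)† = f† ▷ Z := by
  rw [← tensorHom_id, dag_tensor, dag_id, tensorHom_id]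

lemma IsMonoidObj.isFrobeniusMonoid_of_dag_eq {A : C} {m : A ⊗ A ⟶ A} {u : 𝟙_ C ⟶ A}
    (hA : IsMonoidObj A m u)
    (hm : (m† ▷ A ≫ (α_ A A A).hom ≫ A ◁ m)† = m† ▷ A ≫ (α_ A A A).hom ≫ A ◁ m) :
    IsFrobeniusMonoid A m u where
  toIsMonoidObj := hA
  frobenius := by
    rw [tensorHom_id, id_tensorHom, tensorHom_id, id_tensorHom, ← hm, dag_comp, dag_comp,
      dag_whiskerLeft, dag_whiskerRight, dag_dag, assoc_unitary, assoc]

end Dagger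

section WriterMonad

open DaggerStruct MonoidalDagger

variable [MonoidalDagger C]

lemma wMu_dag (B : C) (m : B ⊗ B ⟶ B) (A : C) :
    (wMu B m A)† = A ◁ m† ≫ (α_ A B B).inv := by
  rw [wMu, dag_comp, id_tensorHom, dag_whiskerLeft, assoc_unitary]

lemma wMu_frobenius {B : C} {m : B ⊗ B ⟶ B} {u : 𝟙_ C ⟶ B} (hB : IsFrobeniusMonoid B m u)
    (A : C) :
    ((wMu B m (A ⊗ B))†) ≫ (wMu B m A ⊗ₘ 𝟙 B) =
      ((wMu B m A)† ⊗ₘ 𝟙 B) ≫ wMu B m (A ⊗ B) := by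
  have hfrob := hB.frobenius
  simp only [tensorHom_id, id_tensorHom] at hfrob
  calc _ = (α_ A B B).hom ≫ A ◁ (B ◁ m† ≫ (α_ B B B).inv ≫ m ▷ B) ≫ (α_ A B B).inv := by
        simp only [wMu_dag]; simp only [wMu, tensorHom_id, id_tensorHom]; monoidal
    _ = (α_ A B B).hom ≫ A ◁ (m† ▷ B ≫ (α_ B B B).hom ≫ B ◁ m) ≫ (α_ A B B).inv := by
        rw [← hfrob]
    _ = _ := by simp only [wMu_dag]; simp only [wMu, tensorHom_id, id_tensorHom]; monoidal

lemma wMu_dag_comp_wMu {B : C} {m : B ⊗ B ⟶ B} (hm : m† ≫ m = 𝟙 B) (A : C) :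
    (wMu B m A)† ≫ wMu B m A = 𝟙 (A ⊗ B) := by
  rw [wMu_dag, wMu, id_tensorHom, assoc, Iso.inv_hom_id_assoc, ← whiskerLeft_comp, hm,
    whiskerLeft_id]

end WriterMonad

def strengthUnit (T : Monad C) (st : ∀ X Y : C, X ⊗ T.obj Y ⟶ T.obj (X ⊗ Y)) (X : C) :
    X ⊗ T.obj (𝟙_ C) ⟶ T.obj X :=
  st X (𝟙_ C) ≫ T.map (ρ_ X).hom

lemma tMul_eq_strengthUnit_comp (T : Monad C) (st : ∀ X Y : C, X ⊗ T.obj Y ⟶ T.obj (X ⊗ Y)) :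
    tMul T st = strengthUnit T st (T.obj (𝟙_ C)) ≫ T.μ.app (𝟙_ C) := by
  rw [tMul, strengthUnit, assoc]

namespace IsStrongFrobeniusMonad

open DaggerStruct MonoidalDagger

variable [MonoidalDagger C] {T : Monad C} {st : ∀ X Y : C, X ⊗ T.obj Y ⟶ T.obj (X ⊗ Y)}
  (h : IsStrongFrobeniusMonad T st)
include h

lemma strengthUnit_comp_dag (X : C) : strengthUnit T st X ≫ (strengthUnit T st X)† = 𝟙 _ := by
  rw [strengthUnit, dag_comp, ← h.map_dag, runitor_unitary, assoc, ← T.map_comp_assoc,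
    Iso.hom_inv_id, T.map_id, id_comp, h.st_unitary₁]

lemma dag_comp_strengthUnit (X : C) : (strengthUnit T st X)† ≫ strengthUnit T st X = 𝟙 _ := by
  rw [strengthUnit, dag_comp, ← h.map_dag, runitor_unitary, assoc,
    reassoc_of% (h.st_unitary₂ X (𝟙_ C)), ← T.map_comp, Iso.inv_hom_id, T.map_id]

lemma whiskerRight_strengthUnit {X Y : C} (f : X ⟶ Y) :
    f ▷ T.obj (𝟙_ C) ≫ strengthUnit T st Y = strengthUnit T st X ≫ T.map f := by
  have := h.st_natural f (𝟙 (𝟙_ C))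
  rw [T.map_id, tensorHom_id, tensorHom_id] at this
  rw [strengthUnit, strengthUnit, reassoc_of% this, ← T.map_comp, rightUnitor_naturality,
    T.map_comp, assoc]

lemma strengthUnit_tensorUnit : strengthUnit T st (𝟙_ C) = (λ_ (T.obj (𝟙_ C))).hom := by
  rw [strengthUnit, ← unitors_equal, h.st_lunit]

lemma whiskerLeft_η_strengthUnit (X : C) :
    X ◁ T.η.app (𝟙_ C) ≫ strengthUnit T st X = (ρ_ X).hom ≫ T.η.app X := by
  have := h.st_eta X (𝟙_ C)
  rw [id_tensorHom] at this
  rw [strengthUnit, reassoc_of% this]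
  exact (T.η.naturality (ρ_ X).hom).symm

lemma whiskerLeft_μ_strengthUnit (X : C) :
    X ◁ T.μ.app (𝟙_ C) ≫ strengthUnit T st X =
      st X (T.obj (𝟙_ C)) ≫ T.map (strengthUnit T st X) ≫ T.μ.app X := by
  have := h.st_mu X (𝟙_ C)
  rw [id_tensorHom] at this
  rw [strengthUnit, reassoc_of% this, T.map_comp, assoc]
  congr 2
  exact (T.μ.naturality (ρ_ X).hom).symm

lemma associator_whiskerLeft_strengthUnit (X Y : C) :
    (α_ X Y (T.obj (𝟙_ C))).hom ≫ X ◁ strengthUnit T st Y ≫ st X Y =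
      strengthUnit T st (X ⊗ Y) := by
  have hnat := h.st_natural (𝟙 X) (ρ_ Y).hom
  simp only [id_tensorHom] at hnat
  have hassoc := h.st_assoc X Y (𝟙_ C)
  rw [id_tensorHom] at hassoc
  rw [strengthUnit, strengthUnit, whiskerLeft_comp, assoc, hnat, ← Iso.eq_inv_comp,
    reassoc_of% hassoc, ← T.map_comp, whiskerLeft_rightUnitor]

lemma associator_whiskerLeft_tMul_strengthUnit (X : C) :
    (α_ X (T.obj (𝟙_ C)) (T.obj (𝟙_ C))).hom ≫ X ◁ tMul T st ≫ strengthUnit T st X =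
      strengthUnit T st (X ⊗ T.obj (𝟙_ C)) ≫ T.map (strengthUnit T st X) ≫ T.μ.app X := by
  rw [tMul_eq_strengthUnit_comp, whiskerLeft_comp, assoc, h.whiskerLeft_μ_strengthUnit,
    ← h.associator_whiskerLeft_strengthUnit, assoc, assoc]

lemma isMonoidObj_tMul : IsMonoidObj (T.obj (𝟙_ C)) (tMul T st) (T.η.app (𝟙_ C)) where
  mul_assoc := by
    rw [tensorHom_id, id_tensorHom]
    calc tMul T st ▷ T.obj (𝟙_ C) ≫ tMul T st
        = strengthUnit T st _ ≫ T.map (strengthUnit T st _) ≫ T.map (T.μ.app (𝟙_ C)) ≫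
            T.μ.app (𝟙_ C) := by
          rw [tMul_eq_strengthUnit_comp, reassoc_of% (h.whiskerRight_strengthUnit _), T.map_comp,
            assoc]
      _ = strengthUnit T st _ ≫ T.map (strengthUnit T st _) ≫ T.μ.app (T.obj (𝟙_ C)) ≫
            T.μ.app (𝟙_ C) := by
          rw [T.assoc]
      _ = _ := by
          rw [← reassoc_of% (h.associator_whiskerLeft_tMul_strengthUnit _),
            ← tMul_eq_strengthUnit_comp]
  one_mul := by
    rw [tensorHom_id, tMul_eq_strengthUnit_comp, reassoc_of% (h.whiskerRight_strengthUnit _),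
      T.right_unit, ← h.strengthUnit_tensorUnit]
    exact comp_id _
  mul_one := by
    rw [id_tensorHom, tMul_eq_strengthUnit_comp, reassoc_of% (h.whiskerLeft_η_strengthUnit _),
      assoc, T.left_unit]
    exact comp_id _

lemma dag_tMul_strengthUnit :
    (tMul T st)† ≫ strengthUnit T st (T.obj (𝟙_ C)) = (T.μ.app (𝟙_ C))† := by
  rw [tMul_eq_strengthUnit_comp, dag_comp, assoc, h.dag_comp_strengthUnit, comp_id]

lemma frobeniusLeft_tMul_strengthUnit :
    (tMul T st)† ▷ T.obj (𝟙_ C) ≫ (α_ _ _ _).hom ≫ T.obj (𝟙_ C) ◁ tMul T st ≫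
        strengthUnit T st (T.obj (𝟙_ C)) =
      strengthUnit T st (T.obj (𝟙_ C)) ≫ T.map (T.μ.app (𝟙_ C))† ≫ T.μ.app (T.obj (𝟙_ C)) := by
  rw [h.associator_whiskerLeft_tMul_strengthUnit, reassoc_of% (h.whiskerRight_strengthUnit _),
    ← T.map_comp_assoc, h.dag_tMul_strengthUnit]

lemma frobeniusLeft_tMul :
    (tMul T st)† ▷ T.obj (𝟙_ C) ≫ (α_ _ _ _).hom ≫ T.obj (𝟙_ C) ◁ tMul T st =
      strengthUnit T st (T.obj (𝟙_ C)) ≫ T.map (T.μ.app (𝟙_ C))† ≫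
        T.μ.app (T.obj (𝟙_ C)) ≫ (strengthUnit T st (T.obj (𝟙_ C)))† := by
  rw [← reassoc_of% h.frobeniusLeft_tMul_strengthUnit, h.strengthUnit_comp_dag, comp_id]

lemma isFrobeniusMonoid_tMul :
    IsFrobeniusMonoid (T.obj (𝟙_ C)) (tMul T st) (T.η.app (𝟙_ C)) := by
  refine h.isMonoidObj_tMul.isFrobeniusMonoid_of_dag_eq ?_
  rw [h.frobeniusLeft_tMul]
  simp only [dag_comp, dag_dag, ← h.map_dag, assoc]
  rw [reassoc_of% (h.frobenius (𝟙_ C))]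

lemma dag_tMul_comp_tMul (hμ : (T.μ.app (𝟙_ C))† ≫ T.μ.app (𝟙_ C) = 𝟙 (T.obj (𝟙_ C))) :
    (tMul T st)† ≫ tMul T st = 𝟙 (T.obj (𝟙_ C)) := by
  rw [tMul_eq_strengthUnit_comp, ← assoc, ← tMul_eq_strengthUnit_comp, h.dag_tMul_strengthUnit,
    hμ]

end IsStrongFrobeniusMonad

/-- STATEMENT 19: the equivalence `B ↦ − ⊗ B`, `T ↦ T(I)` between Frobenius monoids and
strong Frobenius monads restricts to special ones: if `B` is a special Frobenius monoid
then the writer monad `− ⊗ B` is a special (strong Frobenius) monad, and if `T` is a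
special strong Frobenius monad then `T(I)` is a special Frobenius monoid. -/
theorem special_restriction {C : Type u} [Category.{v} C] [MonoidalCategory C]
    [MonoidalDagger C] :
    (∀ (B : C) (m : B ⊗ B ⟶ B) (u : 𝟙_ C ⟶ B),
      IsFrobeniusMonoid B m u → (m†) ≫ m = 𝟙 B →
        (∀ A : C, ((wMu B m (A ⊗ B))†) ≫ (wMu B m A ⊗ₘ 𝟙 B) =
            ((wMu B m A)† ⊗ₘ 𝟙 B) ≫ wMu B m (A ⊗ B)) ∧
        (∀ A : C, ((wMu B m A)†) ≫ wMu B m A = 𝟙 (A ⊗ B))) ∧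
    (∀ (T : Monad C) (st : ∀ X Y : C, X ⊗ T.obj Y ⟶ T.obj (X ⊗ Y)),
      IsStrongFrobeniusMonad T st →
        (∀ A : C, ((T.μ.app A)†) ≫ T.μ.app A = 𝟙 (T.obj A)) →
        IsFrobeniusMonoid (T.obj (𝟙_ C)) (tMul T st) (T.η.app (𝟙_ C)) ∧
        ((tMul T st)†) ≫ tMul T st = 𝟙 (T.obj (𝟙_ C))) :=
  ⟨fun _ _ _ hB hm => ⟨wMu_frobenius hB, wMu_dag_comp_wMu hm⟩,
    fun _ _ hT hμ => ⟨hT.isFrobeniusMonoid_tMul, hT.dag_tMul_comp_tMul (hμ _)⟩⟩
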